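/- Let m ≥ 1 and let d = 2e be an even positive integer. A homogeneous polynomial f ∈ ℂ[x_0,…,x_m] of degree d satisfies x_j·(∂f/∂x_i) = x_i·(∂f/∂x_j) as polynomials for all 0 ≤ i, j ≤ m if and only if f = c·q^e for some scalar c ∈ ℂ. Hence the kernel of the linear map f ↦ (M_{ij}(f))_{i,j} on degree-d forms is the one-dimensional span of q^{d/2}. -/

import Mathlib

/-! If all eigen-minors of `f` vanish, `x₁ ∂₀f = x₀ ∂₁f` makes the prime `x₀` divide `∂₀f`, and
then `∂ₖf = xₖ g` for every `k` with one common `g` of degree `deg f - 2`. Euler's identity turns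
this into `(deg f) f = q g`, and `g` again has vanishing eigen-minors since `∂ⱼ(xᵢ g) = ∂ⱼ∂ᵢ f` is
symmetric in `i, j`; induction on the degree concludes. Conversely `∂ᵢ (q ^ e) = 2 e xᵢ q ^ (e - 1)`.
-/

open MvPolynomial

namespace MvPolynomial

variable {σ R : Type*}

section CommSemiring

variable [CommSemiring R]

theorem homogeneousComponent_mul_of_isHomogeneous_left {φ : MvPolynomial σ R} {m : ℕ}
    (hφ : φ.IsHomogeneous m) (n : ℕ) (ψ : MvPolynomial σ R) :
    homogeneousComponent (m + n) (φ * ψ) = φ * homogeneousComponent n ψ := by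
  let := gradedAlgebra (σ := σ) (R := R)
  simpa only [DirectSum.decompose, Equiv.coe_fn_mk, decomposition.decompose'_apply] using
    DirectSum.coe_decompose_mul_add_of_left_mem (homogeneousSubmodule σ R) (b := ψ) (j := n)
      ((mem_homogeneousSubmodule m φ).mpr hφ)

def EigenminorsVanish (f : MvPolynomial σ R) : Prop :=
  ∀ i j, X j * pderiv i f = X i * pderiv j f

variable [Fintype σ]

theorem pderiv_sum_X_sq (i : σ) : pderiv i (∑ k, X k ^ 2 : MvPolynomial σ R) = 2 * X i := by
  classical
  simp [pderiv_X, Pi.single_apply, mul_comm]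

theorem eigenminorsVanish_C_mul_sum_X_sq_pow (c : R) (e : ℕ) :
    EigenminorsVanish (C c * (∑ k, X k ^ 2) ^ e : MvPolynomial σ R) := by
  intro i j
  simp only [pderiv_C_mul, pderiv_pow, pderiv_sum_X_sq]
  ring

theorem IsHomogeneous.smul_eq_sum_X_sq_mul {f g : MvPolynomial σ R} {n : ℕ}
    (hf : f.IsHomogeneous n) (hg : ∀ k, pderiv k f = X k * g) :
    n • f = (∑ k, X k ^ 2) * g := by
  simp only [← hf.sum_X_mul_pderiv, hg, Finset.sum_mul, sq, mul_assoc]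

end CommSemiring

section CommRing

variable [CommRing R]

theorem pderiv_comm (i j : σ) (f : MvPolynomial σ R) :
    pderiv i (pderiv j f) = pderiv j (pderiv i f) := by
  -- the commutator of two derivations is a derivation, and this one kills every variable
  have : ⁅pderiv (R := R) i, pderiv (R := R) j⁆ = 0 := by
    classical
    exact derivation_ext fun k => by
      simp [Derivation.commutator_apply, pderiv_X, Pi.single_apply, apply_ite (pderiv _)]
  simpa [Derivation.commutator_apply, sub_eq_zero] using congr($this f)

theorem EigenminorsVanish.of_forall_pderiv_eq_X_mul {f g : MvPolynomial σ R}
    (hg : ∀ k, pderiv k f = X k * g) : EigenminorsVanish g := by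
  intro i j
  have hsymm := pderiv_comm j i f
  rw [hg, hg, pderiv_mul, pderiv_mul] at hsymm
  have hX : pderiv j (X i : MvPolynomial σ R) = pderiv i (X j) := by
    classical
    simp only [pderiv_X, Pi.single_apply, eq_comm]
  rw [hX] at hsymm
  exact (add_left_cancel hsymm).symm

variable [IsDomain R]

theorem EigenminorsVanish.exists_forall_pderiv_eq_X_mul {f : MvPolynomial σ R}
    (hf : EigenminorsVanish f) {i j : σ} (hij : i ≠ j) :
    ∃ g, ∀ k, pderiv k f = X k * g := by
  have hdvd : X i ∣ X j * pderiv i f := ⟨pderiv j f, hf i j⟩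
  obtain ⟨g, hg⟩ := (X_prime.dvd_or_dvd hdvd).resolve_left (by simpa using hij)
  refine ⟨g, fun k => mul_left_cancel₀ (X_ne_zero i) ?_⟩
  rw [← hf, hg]
  ring

theorem EigenminorsVanish.exists_isHomogeneous_forall_pderiv_eq_X_mul [Nontrivial σ]
    {f : MvPolynomial σ R} (hf : EigenminorsVanish f) {n : ℕ} (hhom : f.IsHomogeneous (n + 2)) :
    ∃ g, g.IsHomogeneous n ∧ ∀ k, pderiv k f = X k * g := by
  obtain ⟨i, j, hij⟩ := exists_pair_ne σ
  obtain ⟨g, hg⟩ := hf.exists_forall_pderiv_eq_X_mul hij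
  -- `g` need not be homogeneous, but each `∂ₖf = xₖ g` is, so the degree `n` part of `g` works
  refine ⟨homogeneousComponent n g, homogeneousComponent_isHomogeneous n g, fun k => ?_⟩
  rw [← homogeneousComponent_mul_of_isHomogeneous_left (isHomogeneous_X R k), ← hg,
    homogeneousComponent_eq_self]
  simpa [add_comm 1 n] using hhom.pderiv (i := k)

end CommRing

theorem EigenminorsVanish.exists_eq_C_mul_sum_X_sq_pow {K : Type*} [Field K] [CharZero K]
    [Fintype σ] [Nontrivial σ] {e : ℕ} {f : MvPolynomial σ K} (hf : EigenminorsVanish f)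
    (hhom : f.IsHomogeneous (2 * e)) :
    ∃ c, f = C c * (∑ k, X k ^ 2) ^ e := by
  induction e generalizing f with
  | zero =>
    rw [mul_zero, ← totalDegree_zero_iff_isHomogeneous, totalDegree_eq_zero_iff_eq_C] at hhom
    exact ⟨coeff 0 f, by rwa [pow_zero, mul_one]⟩
  | succ e ih =>
    obtain ⟨g, hg_hom, hg⟩ :=
      EigenminorsVanish.exists_isHomogeneous_forall_pderiv_eq_X_mul hf (n := 2 * e) hhom
    obtain ⟨c, rfl⟩ := ih (.of_forall_pderiv_eq_X_mul hg) hg_hom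
    have heuler := hhom.smul_eq_sum_X_sq_mul hg
    rw [← Nat.cast_smul_eq_nsmul K, smul_eq_C_mul] at heuler
    have hdeg : ((2 * (e + 1) : ℕ) : K) ≠ 0 := Nat.cast_ne_zero.mpr (by omega)
    refine ⟨((2 * (e + 1) : ℕ) : K)⁻¹ * c, ?_⟩
    calc f = C ((2 * (e + 1) : ℕ) : K)⁻¹ * (C ((2 * (e + 1) : ℕ) : K) * f) := by
          rw [← mul_assoc, ← C_mul, inv_mul_cancel₀ hdeg, C_1, one_mul]
      _ = _ := by rw [heuler, C_mul, pow_succ]; ring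

end MvPolynomial

theorem eigenminor_kernel_even_general (m e : ℕ) (hm : 1 ≤ m)
    (f : MvPolynomial (Fin (m + 1)) ℂ) (hf : f.IsHomogeneous (2 * e)) :
    (∀ i j : Fin (m + 1), X j * pderiv i f = X i * pderiv j f) ↔
      ∃ c : ℂ, f = C c * (∑ i : Fin (m + 1), X i ^ 2) ^ e := by
  have : Nontrivial (Fin (m + 1)) := Fin.nontrivial_iff_two_le.mpr (by omega)
  refine ⟨fun hv => EigenminorsVanish.exists_eq_C_mul_sum_X_sq_pow hv hf, ?_⟩
  rintro ⟨c, rfl⟩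
  exact eigenminorsVanish_C_mul_sum_X_sq_pow c e

theorem eigenminor_kernel_even (m e : ℕ) (hm : 1 ≤ m) (he : 1 ≤ e)
    (f : MvPolynomial (Fin (m + 1)) ℂ) (hf : f.IsHomogeneous (2 * e)) :
    (∀ i j : Fin (m + 1), X j * pderiv i f = X i * pderiv j f) ↔
      ∃ c : ℂ, f = C c * (∑ i : Fin (m + 1), X i ^ 2) ^ e :=
  eigenminor_kernel_even_general m e hm f hf
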